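/- Let J : ℕ → ℕ be the Josephus sequence, defined by J(1) = 1, J(2n) = 2J(n) − 1 and J(2n+1) = 2J(n) + 1 for n ≥ 1 (equivalently, J(2^N + k) = 2k + 1 for 0 ≤ k < 2^N). Then Σ(N) = Σ_{n=0}^{2^N−1} J(2^N + n) = 4^N, and the probability measures μ_N = (1/4^N) Σ_{n=0}^{2^N−1} (2n+1)·δ_{n/2^N} converge weakly as N → ∞ to the absolutely continuous probability measure on [0,1) with density g(x) = 2x with respect to Lebesgue measure. -/

import Mathlib

open MeasureTheory Filter Topology

/-- The `N`-th approximant to the ghost measure of `f`: the normalised Dirac comb built from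
the values of `f` on the fundamental region `[2^N, 2^(N+1))`. -/
noncomputable def ghostApprox (f : ℕ → ℕ) (N : ℕ) : Measure ℝ :=
  (∑ n ∈ Finset.range (2 ^ N), (f (2 ^ N + n) : ENNReal))⁻¹ •
    ∑ n ∈ Finset.range (2 ^ N), (f (2 ^ N + n) : ENNReal) • Measure.dirac ((n : ℝ) / 2 ^ N)

/-- Weak (vague) convergence of a sequence of finite measures on `ℝ`. -/
def WeakLimit (μs : ℕ → Measure ℝ) (μ : Measure ℝ) : Prop :=
  ∀ g : BoundedContinuousFunction ℝ ℝ,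
    Tendsto (fun N => ∫ x, g x ∂(μs N)) atTop (𝓝 (∫ x, g x ∂μ))

/-!
On the fundamental region `[2^N, 2^(N+1))` the recursion forces `J (2^N + k) = 2k + 1`, so
`Σ(N)` is the sum of the first `2^N` odd numbers, i.e. `4^N`, and
`∫ g dμ_N = Σₖ (2k+1)/4^N · g(k/2^N)`. Up to an error of `2^(-N)` times a Riemann sum of `g`,
this is the dyadic Riemann sum of `x ↦ 2x g(x)` on `[0,1]`, which converges to `∫₀¹ 2x g(x) dx`.
-/

open Finset

theorem josephus_two_pow_add (J : ℕ → ℕ) (hJ1 : J 1 = 1)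
    (heven : ∀ n, 1 ≤ n → (J (2 * n) : ℤ) = 2 * (J n : ℤ) - 1)
    (hodd : ∀ n, 1 ≤ n → (J (2 * n + 1) : ℤ) = 2 * (J n : ℤ) + 1) (N : ℕ) :
    ∀ k < 2 ^ N, J (2 ^ N + k) = 2 * k + 1 := by
  induction N with
  | zero =>
    intro k hk
    obtain rfl : k = 0 := by simpa using hk
    simpa using hJ1
  | succ N ih =>
    intro k hk
    have hpos : 1 ≤ 2 ^ N := Nat.one_le_two_pow
    obtain ⟨q, rfl | rfl⟩ := Nat.even_or_odd' k
    · have h := heven (2 ^ N + q) (by omega)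
      rw [ih q (by omega)] at h
      rw [show 2 ^ (N + 1) + 2 * q = 2 * (2 ^ N + q) by ring]
      omega
    · have h := hodd (2 ^ N + q) (by omega)
      rw [ih q (by omega)] at h
      rw [show 2 ^ (N + 1) + (2 * q + 1) = 2 * (2 ^ N + q) + 1 by ring]
      omega

theorem sum_range_two_mul_add_one (m : ℕ) : ∑ i ∈ range m, (2 * i + 1) = m ^ 2 := by
  induction m with
  | zero => rfl
  | succ m ih => rw [sum_range_succ, ih]; ring

theorem integral_ghostApprox (f : ℕ → ℕ) (N : ℕ) (g : ℝ → ℝ) :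
    ∫ x, g x ∂ghostApprox f N = (∑ n ∈ range (2 ^ N), (f (2 ^ N + n) : ℝ))⁻¹ *
      ∑ n ∈ range (2 ^ N), f (2 ^ N + n) * g (n / 2 ^ N) := by
  have hint : ∀ n ∈ range (2 ^ N),
      Integrable g ((f (2 ^ N + n) : ENNReal) • Measure.dirac ((n : ℝ) / 2 ^ N)) :=
    fun n _ => (integrable_dirac enorm_lt_top).smul_measure ENNReal.coe_ne_top
  simp [ghostApprox, integral_smul_measure, integral_finsetSum_measure hint, integral_dirac,
    ENNReal.toReal_sum, mul_sum]

theorem integral_withDensity_two_mul (g : ℝ → ℝ) :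
    ∫ x, g x ∂(volume.restrict (Set.Ico (0 : ℝ) 1)).withDensity (fun x => ENNReal.ofReal (2 * x))
      = ∫ x in (0 : ℝ)..1, 2 * x * g x := by
  rw [integral_withDensity_eq_integral_toReal_smul (by fun_prop)
    (.of_forall fun _ => ENNReal.ofReal_lt_top),
    intervalIntegral.integral_of_le zero_le_one, ← integral_Ico_eq_integral_Ioc]
  refine setIntegral_congr_fun measurableSet_Ico fun x hx => ?_
  rw [ENNReal.toReal_ofReal (by linarith [hx.1]), smul_eq_mul]

theorem abs_mul_sub_intervalIntegral_le {h : ℝ → ℝ} {a b ε : ℝ} (hab : a ≤ b)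
    (hint : IntervalIntegrable h volume a b) (hε : ∀ x ∈ Set.Ioc a b, |h a - h x| ≤ ε) :
    |(b - a) * h a - ∫ x in a..b, h x| ≤ ε * (b - a) := by
  have hconst : (b - a) * h a = ∫ _ in a..b, h a := by
    rw [intervalIntegral.integral_const, smul_eq_mul]
  calc |(b - a) * h a - ∫ x in a..b, h x| = ‖∫ x in a..b, (h a - h x)‖ := by
        rw [hconst, intervalIntegral.integral_sub intervalIntegrable_const hint, Real.norm_eq_abs]
    _ ≤ ε * |b - a| := intervalIntegral.norm_integral_le_of_norm_le_const fun x hx =>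
        hε x (Set.uIoc_of_le hab ▸ hx)
    _ = ε * (b - a) := by rw [abs_of_nonneg (sub_nonneg.2 hab)]

theorem abs_sum_range_riemann_sub_integral_le {h : ℝ → ℝ} {n : ℕ} {ε : ℝ} (hn : 0 < n)
    (hc : ContinuousOn h (Set.Icc 0 1))
    (hε : ∀ x ∈ Set.Icc (0 : ℝ) 1, ∀ y ∈ Set.Icc (0 : ℝ) 1, x ≤ y → y ≤ x + (n : ℝ)⁻¹ →
      |h x - h y| ≤ ε) :
    |∑ k ∈ range n, (n : ℝ)⁻¹ * h (k / n) - ∫ x in (0 : ℝ)..1, h x| ≤ ε := by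
  have hn_pos : (0 : ℝ) < n := by exact_mod_cast hn
  set a : ℕ → ℝ := fun k => k / n
  have hstep : ∀ k, a (k + 1) - a k = (n : ℝ)⁻¹ := fun k => by
    simp only [a]; push_cast; field_simp; ring
  have hmono : ∀ k, a k ≤ a (k + 1) := fun k => by linarith [hstep k, inv_pos.2 hn_pos]
  have ha_mem : ∀ k ≤ n, a k ∈ Set.Icc (0 : ℝ) 1 := fun k hk =>
    ⟨by positivity, (div_le_one hn_pos).2 (by exact_mod_cast hk)⟩
  have hint : ∀ k < n, IntervalIntegrable h volume (a k) (a (k + 1)) := fun k hk =>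
    (hc.mono (Set.Icc_subset_Icc (ha_mem k hk.le).1 (ha_mem (k + 1) hk).2)).intervalIntegrable_of_Icc
      (hmono k)
  have hsplit : ∑ k ∈ range n, ∫ x in a k..a (k + 1), h x = ∫ x in (0 : ℝ)..1, h x := by
    rw [intervalIntegral.sum_integral_adjacent_intervals hint]
    simp [a, hn_pos.ne']
  have hpiece : ∀ k ∈ range n,
      |(n : ℝ)⁻¹ * h (a k) - ∫ x in a k..a (k + 1), h x| ≤ ε * (n : ℝ)⁻¹ := by
    intro k hk
    have hk := mem_range.1 hk
    rw [← hstep k]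
    refine abs_mul_sub_intervalIntegral_le (hmono k) (hint k hk) fun x hx =>
      hε _ (ha_mem k hk.le) x ⟨(ha_mem k hk.le).1.trans hx.1.le, hx.2.trans (ha_mem (k + 1) hk).2⟩
      hx.1.le (by linarith [hx.2, hstep k])
  calc |∑ k ∈ range n, (n : ℝ)⁻¹ * h (a k) - ∫ x in (0 : ℝ)..1, h x|
      = |∑ k ∈ range n, ((n : ℝ)⁻¹ * h (a k) - ∫ x in a k..a (k + 1), h x)| := by
        rw [← hsplit, sum_sub_distrib]
    _ ≤ ∑ k ∈ range n, ε * (n : ℝ)⁻¹ := (abs_sum_le_sum_abs _ _).trans (sum_le_sum hpiece)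
    _ = ε := by rw [sum_const, card_range, nsmul_eq_mul]; field_simp

theorem tendsto_sum_range_riemann {h : ℝ → ℝ} (hc : ContinuousOn h (Set.Icc 0 1)) :
    Tendsto (fun n : ℕ => ∑ k ∈ range n, (n : ℝ)⁻¹ * h (k / n)) atTop
      (𝓝 (∫ x in (0 : ℝ)..1, h x)) := by
  rw [Metric.tendsto_atTop]
  intro ε hε
  obtain ⟨δ, hδ, hδh⟩ := Metric.uniformContinuousOn_iff.1
    (isCompact_Icc.uniformContinuousOn_of_continuous hc) (ε / 2) (half_pos hε)
  obtain ⟨n₀, hn₀⟩ := exists_nat_one_div_lt hδ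
  refine ⟨n₀ + 1, fun n hn => ?_⟩
  have hmesh : (n : ℝ)⁻¹ < δ := calc
    (n : ℝ)⁻¹ ≤ 1 / (n₀ + 1) := by rw [one_div]; gcongr; exact_mod_cast hn
    _ < δ := hn₀
  rw [Real.dist_eq]
  refine (abs_sum_range_riemann_sub_integral_le (n₀.succ_pos.trans_le hn) hc
    fun x hx y hy hxy hyx => ?_).trans_lt (half_lt_self hε)
  refine (hδh x hx y hy ?_).le
  rw [Real.dist_eq, abs_sub_lt_iff]
  constructor <;> linarith

theorem tendsto_sum_range_two_pow_riemann {h : ℝ → ℝ} (hc : ContinuousOn h (Set.Icc 0 1)) :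
    Tendsto (fun N : ℕ => ∑ k ∈ range (2 ^ N), (2 ^ N : ℝ)⁻¹ * h (k / 2 ^ N)) atTop
      (𝓝 (∫ x in (0 : ℝ)..1, h x)) := by
  have := (tendsto_sum_range_riemann hc).comp (tendsto_pow_atTop_atTop_of_one_lt one_lt_two)
  simpa only [Function.comp_def, Nat.cast_pow, Nat.cast_ofNat] using this

theorem stmt_18 (J : ℕ → ℕ) (hJ1 : J 1 = 1)
    (heven : ∀ n, 1 ≤ n → (J (2 * n) : ℤ) = 2 * (J n : ℤ) - 1)
    (hodd : ∀ n, 1 ≤ n → (J (2 * n + 1) : ℤ) = 2 * (J n : ℤ) + 1) :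
    (∀ N : ℕ, ∑ n ∈ Finset.range (2 ^ N), J (2 ^ N + n) = 4 ^ N) ∧
      WeakLimit (ghostApprox J)
        ((volume.restrict (Set.Ico (0:ℝ) 1)).withDensity
          fun x => ENNReal.ofReal (2 * x)) := by
  have hJ := josephus_two_pow_add J hJ1 heven hodd
  have hsum : ∀ N : ℕ, ∑ n ∈ range (2 ^ N), J (2 ^ N + n) = 4 ^ N := fun N => by
    rw [sum_congr rfl fun n hn => hJ N n (mem_range.1 hn), sum_range_two_mul_add_one,
      ← pow_mul, mul_comm, pow_mul]
    norm_num
  refine ⟨hsum, fun g => ?_⟩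
  have hmain := tendsto_sum_range_two_pow_riemann (h := fun x => 2 * x * g x) (by fun_prop)
  have herr := (tendsto_inv_atTop_zero.comp (tendsto_pow_atTop_atTop_of_one_lt one_lt_two)).mul
    (tendsto_sum_range_two_pow_riemann (h := g) g.continuous.continuousOn)
  have hlim := hmain.add herr
  rw [zero_mul, add_zero] at hlim
  rw [integral_withDensity_two_mul]
  refine hlim.congr fun N => ?_
  have h4 : (4 : ℝ) ^ N = 2 ^ N * 2 ^ N := by rw [← mul_pow]; norm_num
  rw [integral_ghostApprox, ← Nat.cast_sum, hsum, Function.comp_apply, mul_sum, mul_sum,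
    ← sum_add_distrib]
  refine sum_congr rfl fun n hn => ?_
  rw [hJ N n (mem_range.1 hn)]
  push_cast
  rw [h4]
  field_simp
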